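/- Let d₁, d₂ be positive integers, A a d₁×d₁ real symmetric matrix, D a d₂×d₂ real symmetric matrix, Z a d₁×d₂ real matrix, and J = [[A, Z], [−Zᵀ, D]]. Suppose the spectra of A and D are separated, i.e., either λmax(D) < λmin(A) with gap δ = λmin(A) − λmax(D), or λmax(A) < λmin(D) with gap δ = λmin(D) − λmax(A). If ‖Z‖ > δ/2, then every non-real eigenvalue μ of J satisfies |Im(μ)| ≤ √(‖Z‖² − δ²/4). -/

import Mathlib

/-!
Let `(x, y)` be an eigenvector of `J` for `μ`, and put `s = ‖x‖²`, `t = ‖y‖²`, `a = x*Ax`,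
`d = y*Dy` (both real) and `z = x*Zy`. Pairing the two block rows with `x` and `y` gives
`a + z = μ s` and `d - z̄ = μ t`. Imaginary parts give `Im z = Im μ · s = Im μ · t`, hence `s = t`
because `Im μ ≠ 0`; real parts give `d - a = 2 Re z`, so the spectral gap forces
`|Re z| ≥ δ s / 2`. As `|z| ≤ ‖Z‖ s`, we get `(Im μ)² s² = |z|² - (Re z)² ≤ (‖Z‖² - δ²/4) s²`.

For the real matrices of the statement, the Rayleigh bounds and the operator-norm bound pass to
complex vectors by splitting them into real and imaginary parts.
-/

open Matrix

/-- Smallest eigenvalue of a Hermitian (real symmetric) matrix. -/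
noncomputable def lamMin {n : Type*} [Fintype n] [DecidableEq n] {A : Matrix n n ℝ}
    (hA : A.IsHermitian) : ℝ := ⨅ i, hA.eigenvalues i

/-- Largest eigenvalue of a Hermitian (real symmetric) matrix. -/
noncomputable def lamMax {n : Type*} [Fintype n] [DecidableEq n] {A : Matrix n n ℝ}
    (hA : A.IsHermitian) : ℝ := ⨆ i, hA.eigenvalues i

/-- The ℓ²→ℓ² operator norm of a rectangular real matrix. -/
noncomputable def l2OpNorm {m n : ℕ} (Z : Matrix (Fin m) (Fin n) ℝ) : ℝ :=
  ‖LinearMap.toContinuousLinearMap (Matrix.toEuclideanLin Z)‖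

namespace Matrix

open scoped ComplexConjugate ComplexOrder

variable {m n : Type*} [Fintype m] [Fintype n]

theorem exists_mulVec_eq_smul_of_mem_spectrum {K : Type*} [Field K] [DecidableEq n]
    {M : Matrix n n K} {μ : K} (hμ : μ ∈ spectrum K M) : ∃ v, v ≠ 0 ∧ M *ᵥ v = μ • v := by
  rw [← spectrum_toLin', ← Module.End.hasEigenvalue_iff_mem_spectrum] at hμ
  obtain ⟨v, hv⟩ := hμ.exists_hasEigenvector
  exact ⟨v, hv.2, by simpa using hv.apply_eq_smul⟩

theorem exists_eigenvector_of_mem_spectrum_fromBlocks {K : Type*} [Field K]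
    [DecidableEq m] [DecidableEq n] {A : Matrix m m K} {B : Matrix m n K} {C : Matrix n m K}
    {D : Matrix n n K} {μ : K} (hμ : μ ∈ spectrum K (fromBlocks A B C D)) :
    ∃ x y, (x ≠ 0 ∨ y ≠ 0) ∧ A *ᵥ x + B *ᵥ y = μ • x ∧ C *ᵥ x + D *ᵥ y = μ • y := by
  obtain ⟨v, hv, hMv⟩ := exists_mulVec_eq_smul_of_mem_spectrum hμ
  rw [fromBlocks_mulVec] at hMv
  refine ⟨v ∘ Sum.inl, v ∘ Sum.inr, ?_, funext fun i ↦ congrFun hMv (.inl i),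
    funext fun i ↦ congrFun hMv (.inr i)⟩
  by_contra! h
  exact hv (funext <| Sum.rec (congrFun h.1) (congrFun h.2))

theorem re_star_dotProduct_self_nonneg (x : n → ℂ) : 0 ≤ (star x ⬝ᵥ x).re :=
  (Complex.nonneg_iff.mp (dotProduct_star_self_nonneg x)).1

theorem re_star_dotProduct_self_pos {x : n → ℂ} (hx : x ≠ 0) : 0 < (star x ⬝ᵥ x).re :=
  (Complex.pos_iff.mp (dotProduct_star_self_pos_iff.mpr hx)).1

theorem star_dotProduct_self_eq_re (x : n → ℂ) : star x ⬝ᵥ x = (star x ⬝ᵥ x).re :=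
  Complex.eq_re_of_ofReal_le (r := 0) (by exact_mod_cast dotProduct_star_self_nonneg x)

theorem star_dotProduct_conjTranspose_mulVec (M : Matrix m n ℂ) (x : m → ℂ) (y : n → ℂ) :
    star y ⬝ᵥ Mᴴ *ᵥ x = conj (star x ⬝ᵥ M *ᵥ y) := by
  rw [dotProduct_mulVec, ← star_mulVec, star_dotProduct]
  rfl

theorem IsHermitian.re_star_dotProduct_add_eq {A : Matrix m m ℂ} (hA : A.IsHermitian)
    {B : Matrix m n ℂ} {x : m → ℂ} {y : n → ℂ} {μ : ℂ} (h : A *ᵥ x + B *ᵥ y = μ • x) :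
    ((star x ⬝ᵥ A *ᵥ x).re : ℂ) + star x ⬝ᵥ B *ᵥ y = μ * (star x ⬝ᵥ x).re := by
  have hreal : star x ⬝ᵥ A *ᵥ x = (star x ⬝ᵥ A *ᵥ x).re :=
    Complex.ext rfl (by simpa using hA.im_star_dotProduct_mulVec_self x)
  rw [← hreal, ← star_dotProduct_self_eq_re, ← dotProduct_add, h, dotProduct_smul, smul_eq_mul]

theorem im_sq_le_of_mem_spectrum_fromBlocks [DecidableEq m] [DecidableEq n]
    {A : Matrix m m ℂ} {D : Matrix n n ℂ} (Z : Matrix m n ℂ)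
    (hA : A.IsHermitian) (hD : D.IsHermitian) {δ K : ℝ} (hδ : 0 ≤ δ)
    -- The eigenvector equations force `‖x‖ = ‖y‖`, so separation is only needed for such pairs.
    (hsep : ∀ x y, (star x ⬝ᵥ x).re = (star y ⬝ᵥ y).re →
      δ * (star x ⬝ᵥ x).re ≤ |(star y ⬝ᵥ D *ᵥ y).re - (star x ⬝ᵥ A *ᵥ x).re|)
    (hZ : ∀ x y, ‖star x ⬝ᵥ Z *ᵥ y‖ ^ 2 ≤ K ^ 2 * ((star x ⬝ᵥ x).re * (star y ⬝ᵥ y).re))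
    {μ : ℂ} (hμ : μ ∈ spectrum ℂ (fromBlocks A Z (-Zᴴ) D)) (hμim : μ.im ≠ 0) :
    μ.im ^ 2 ≤ K ^ 2 - δ ^ 2 / 4 := by
  obtain ⟨x, y, hxy, h₁, h₂⟩ := exists_eigenvector_of_mem_spectrum_fromBlocks hμ
  have e₁ := hA.re_star_dotProduct_add_eq h₁
  have e₂ := hD.re_star_dotProduct_add_eq (add_comm (-Zᴴ *ᵥ x) _ ▸ h₂)
  rw [neg_mulVec, dotProduct_neg, star_dotProduct_conjTranspose_mulVec] at e₂
  have hgap := hsep x y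
  have hnorm := hZ x y
  set s := (star x ⬝ᵥ x).re
  set t := (star y ⬝ᵥ y).re
  set z := star x ⬝ᵥ Z *ᵥ y
  have hz_im : z.im = μ.im * s := by simpa using congrArg Complex.im e₁
  have hst : s = t := mul_left_cancel₀ hμim <| by
    rw [← hz_im]; simpa using congrArg Complex.im e₂
  have hs : 0 < s := by
    rcases hxy with hx | hy
    · exact re_star_dotProduct_self_pos hx
    · exact hst ▸ re_star_dotProduct_self_pos hy
  have hz_re : (star y ⬝ᵥ D *ᵥ y).re - (star x ⬝ᵥ A *ᵥ x).re = 2 * z.re := by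
    have r₁ := congrArg Complex.re e₁
    have r₂ := congrArg Complex.re e₂
    simp only [Complex.add_re, Complex.ofReal_re, Complex.mul_re, Complex.ofReal_im,
      Complex.neg_re, Complex.conj_re, mul_zero, sub_zero] at r₁ r₂
    rw [← hst] at r₂
    linarith
  rw [hz_re, abs_mul, abs_two] at hgap
  rw [← hst, ← sq, Complex.sq_norm, Complex.normSq_apply] at hnorm
  have hre_sq : δ ^ 2 * s ^ 2 ≤ 4 * z.re ^ 2 := by
    have := pow_le_pow_left₀ (by positivity) (hgap hst) 2
    rwa [mul_pow, mul_pow, sq_abs, show (2 : ℝ) ^ 2 = 4 by norm_num] at this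
  have hmul : μ.im ^ 2 * s ^ 2 ≤ (K ^ 2 - δ ^ 2 / 4) * s ^ 2 := by
    rw [← mul_pow, ← hz_im, sub_mul]
    nlinarith
  exact le_of_mul_le_mul_right hmul (by positivity)

theorem re_star_dotProduct (x v : n → ℂ) :
    (star x ⬝ᵥ v).re =
      (Complex.re ∘ x) ⬝ᵥ (Complex.re ∘ v) + (Complex.im ∘ x) ⬝ᵥ (Complex.im ∘ v) := by
  simp [dotProduct, Complex.re_sum, Finset.sum_add_distrib]

theorem re_comp_map_mulVec {l : Type*} (M : Matrix l n ℝ) (y : n → ℂ) :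
    Complex.re ∘ (M.map (algebraMap ℝ ℂ) *ᵥ y) = M *ᵥ (Complex.re ∘ y) := by
  ext i; simp [mulVec, dotProduct, Complex.re_sum]

theorem im_comp_map_mulVec {l : Type*} (M : Matrix l n ℝ) (y : n → ℂ) :
    Complex.im ∘ (M.map (algebraMap ℝ ℂ) *ᵥ y) = M *ᵥ (Complex.im ∘ y) := by
  ext i; simp [mulVec, dotProduct, Complex.im_sum]

theorem re_star_dotProduct_map_mulVec (M : Matrix m n ℝ) (x : m → ℂ) (y : n → ℂ) :
    (star x ⬝ᵥ M.map (algebraMap ℝ ℂ) *ᵥ y).re =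
      (Complex.re ∘ x) ⬝ᵥ M *ᵥ (Complex.re ∘ y) + (Complex.im ∘ x) ⬝ᵥ M *ᵥ (Complex.im ∘ y) := by
  rw [re_star_dotProduct, re_comp_map_mulVec, im_comp_map_mulVec]

theorem IsHermitian.spectrum_real_subset_Icc [DecidableEq n] {A : Matrix n n ℝ}
    (hA : A.IsHermitian) : spectrum ℝ A ⊆ Set.Icc (lamMin hA) (lamMax hA) := by
  rw [hA.spectrum_real_eq_range_eigenvalues]
  rintro _ ⟨i, rfl⟩
  exact ⟨ciInf_le (Finite.bddBelow_range _) i, le_ciSup (Finite.bddAbove_range _) i⟩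

theorem IsHermitian.lamMin_mul_dotProduct_self_le [DecidableEq n] {A : Matrix n n ℝ}
    (hA : A.IsHermitian) (u : n → ℝ) : lamMin hA * (u ⬝ᵥ u) ≤ u ⬝ᵥ A *ᵥ u := by
  have hpsd : (A - algebraMap ℝ _ (lamMin hA)).PosSemidef := by
    refine posSemidef_iff_isHermitian_and_spectrum_nonneg.mpr
      ⟨hA.sub (isHermitian_diagonal _), ?_⟩
    rw [← spectrum.sub_singleton_eq]
    rintro _ ⟨a, ha, _, rfl, rfl⟩
    exact sub_nonneg.mpr (hA.spectrum_real_subset_Icc ha).1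
  simpa [sub_mulVec, Algebra.algebraMap_eq_smul_one, smul_mulVec]
    using hpsd.dotProduct_mulVec_nonneg u

theorem IsHermitian.dotProduct_mulVec_le_lamMax_mul [DecidableEq n] {A : Matrix n n ℝ}
    (hA : A.IsHermitian) (u : n → ℝ) : u ⬝ᵥ A *ᵥ u ≤ lamMax hA * (u ⬝ᵥ u) := by
  have hpsd : (algebraMap ℝ _ (lamMax hA) - A).PosSemidef := by
    refine posSemidef_iff_isHermitian_and_spectrum_nonneg.mpr
      ⟨(isHermitian_diagonal _).sub hA, ?_⟩
    rw [← spectrum.singleton_sub_eq]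
    rintro _ ⟨_, rfl, a, ha, rfl⟩
    exact sub_nonneg.mpr (hA.spectrum_real_subset_Icc ha).2
  simpa [sub_mulVec, Algebra.algebraMap_eq_smul_one, smul_mulVec]
    using hpsd.dotProduct_mulVec_nonneg u

theorem IsHermitian.lamMin_mul_le_re_star_dotProduct_map_mulVec [DecidableEq n]
    {A : Matrix n n ℝ} (hA : A.IsHermitian) (x : n → ℂ) :
    lamMin hA * (star x ⬝ᵥ x).re ≤ (star x ⬝ᵥ A.map (algebraMap ℝ ℂ) *ᵥ x).re := by
  rw [re_star_dotProduct_map_mulVec, re_star_dotProduct, mul_add]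
  exact add_le_add (hA.lamMin_mul_dotProduct_self_le _) (hA.lamMin_mul_dotProduct_self_le _)

theorem IsHermitian.re_star_dotProduct_map_mulVec_le_lamMax_mul [DecidableEq n]
    {A : Matrix n n ℝ} (hA : A.IsHermitian) (x : n → ℂ) :
    (star x ⬝ᵥ A.map (algebraMap ℝ ℂ) *ᵥ x).re ≤ lamMax hA * (star x ⬝ᵥ x).re := by
  rw [re_star_dotProduct_map_mulVec, re_star_dotProduct, mul_add]
  exact add_le_add (hA.dotProduct_mulVec_le_lamMax_mul _) (hA.dotProduct_mulVec_le_lamMax_mul _)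

theorem mul_re_star_dotProduct_le_abs_sub_of_separated [DecidableEq m] [DecidableEq n]
    {A : Matrix m m ℝ} {D : Matrix n n ℝ} (hA : A.IsHermitian) (hD : D.IsHermitian) {δ : ℝ}
    (hsep : δ ≤ lamMin hA - lamMax hD ∨ δ ≤ lamMin hD - lamMax hA) (x : m → ℂ) (y : n → ℂ)
    (hxy : (star x ⬝ᵥ x).re = (star y ⬝ᵥ y).re) :
    δ * (star x ⬝ᵥ x).re ≤ |(star y ⬝ᵥ D.map (algebraMap ℝ ℂ) *ᵥ y).re -
      (star x ⬝ᵥ A.map (algebraMap ℝ ℂ) *ᵥ x).re| := by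
  have hx := re_star_dotProduct_self_nonneg x
  have hAlo := hA.lamMin_mul_le_re_star_dotProduct_map_mulVec x
  have hAhi := hA.re_star_dotProduct_map_mulVec_le_lamMax_mul x
  have hDlo := hD.lamMin_mul_le_re_star_dotProduct_map_mulVec y
  have hDhi := hD.re_star_dotProduct_map_mulVec_le_lamMax_mul y
  rw [← hxy] at hDlo hDhi
  rcases hsep with h | h
  · refine le_trans ?_ (neg_abs_le _ |> neg_le.mp)
    nlinarith
  · refine le_trans ?_ (le_abs_self _)
    nlinarith

theorem dotProduct_mulVec_self_le_l2OpNorm_sq {m n : ℕ} (Z : Matrix (Fin m) (Fin n) ℝ)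
    (u : Fin n → ℝ) : (Z *ᵥ u) ⬝ᵥ (Z *ᵥ u) ≤ l2OpNorm Z ^ 2 * (u ⬝ᵥ u) := by
  have hnorm {k : ℕ} (v : Fin k → ℝ) : v ⬝ᵥ v = ‖WithLp.toLp 2 v‖ ^ 2 := by
    rw [← real_inner_self_eq_norm_sq, EuclideanSpace.inner_eq_star_dotProduct]
    simp
  have h := (LinearMap.toContinuousLinearMap (toEuclideanLin Z)).le_opNorm (WithLp.toLp 2 u)
  rw [hnorm, hnorm, ← mul_pow]
  exact pow_le_pow_left₀ (norm_nonneg _) (by simpa [l2OpNorm] using h) 2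

theorem re_star_dotProduct_self_map_mulVec_le {m n : ℕ} (Z : Matrix (Fin m) (Fin n) ℝ)
    (y : Fin n → ℂ) :
    (star (Z.map (algebraMap ℝ ℂ) *ᵥ y) ⬝ᵥ Z.map (algebraMap ℝ ℂ) *ᵥ y).re ≤
      l2OpNorm Z ^ 2 * (star y ⬝ᵥ y).re := by
  rw [re_star_dotProduct, re_star_dotProduct, re_comp_map_mulVec, im_comp_map_mulVec, mul_add]
  exact add_le_add (dotProduct_mulVec_self_le_l2OpNorm_sq Z _)
    (dotProduct_mulVec_self_le_l2OpNorm_sq Z _)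

theorem norm_star_dotProduct_sq_le (x v : n → ℂ) :
    ‖star x ⬝ᵥ v‖ ^ 2 ≤ (star x ⬝ᵥ x).re * (star v ⬝ᵥ v).re := by
  have h := inner_mul_inner_self_le (𝕜 := ℂ) (WithLp.toLp 2 x) (WithLp.toLp 2 v)
  simp only [EuclideanSpace.inner_eq_star_dotProduct] at h
  rw [dotProduct_comm v (star x), dotProduct_comm x (star v), dotProduct_comm x (star x),
    dotProduct_comm v (star v), star_dotProduct v x, norm_star, ← sq] at h
  exact h

theorem norm_star_dotProduct_map_mulVec_sq_le {m n : ℕ} (Z : Matrix (Fin m) (Fin n) ℝ)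
    (x : Fin m → ℂ) (y : Fin n → ℂ) :
    ‖star x ⬝ᵥ Z.map (algebraMap ℝ ℂ) *ᵥ y‖ ^ 2 ≤
      l2OpNorm Z ^ 2 * ((star x ⬝ᵥ x).re * (star y ⬝ᵥ y).re) :=
  calc _ ≤ (star x ⬝ᵥ x).re * (star (Z.map (algebraMap ℝ ℂ) *ᵥ y) ⬝ᵥ
          Z.map (algebraMap ℝ ℂ) *ᵥ y).re := norm_star_dotProduct_sq_le _ _
    _ ≤ (star x ⬝ᵥ x).re * (l2OpNorm Z ^ 2 * (star y ⬝ᵥ y).re) :=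
        mul_le_mul_of_nonneg_left (re_star_dotProduct_self_map_mulVec_le Z y)
          (re_star_dotProduct_self_nonneg x)
    _ = _ := by ring

end Matrix

theorem stmt3_general {d₁ d₂ : ℕ}
    (A : Matrix (Fin d₁) (Fin d₁) ℝ) (D : Matrix (Fin d₂) (Fin d₂) ℝ)
    (Z : Matrix (Fin d₁) (Fin d₂) ℝ)
    (hA : A.IsHermitian) (hD : D.IsHermitian)
    (δ : ℝ)
    (hsep : (lamMax hD < lamMin hA ∧ δ = lamMin hA - lamMax hD) ∨
            (lamMax hA < lamMin hD ∧ δ = lamMin hD - lamMax hA)) :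
    ∀ μ ∈ spectrum ℂ ((Matrix.fromBlocks A Z (-Zᵀ) D).map (algebraMap ℝ ℂ)), μ.im ≠ 0 →
      |μ.im| ≤ Real.sqrt ((l2OpNorm Z) ^ 2 - δ ^ 2 / 4) := by
  intro μ hμ hμim
  have hf : Function.Semiconj (algebraMap ℝ ℂ) star star := algebraMap_star_comm
  have hδ : 0 ≤ δ := by rcases hsep with ⟨h, rfl⟩ | ⟨h, rfl⟩ <;> linarith
  rw [fromBlocks_map, Matrix.map_neg _ (map_neg _), ← conjTranspose_eq_transpose_of_trivial,
    conjTranspose_map _ hf] at hμ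
  have hsep' : δ ≤ lamMin hA - lamMax hD ∨ δ ≤ lamMin hD - lamMax hA :=
    hsep.imp (fun h ↦ h.2.le) (fun h ↦ h.2.le)
  rw [← Real.sqrt_sq_eq_abs]
  exact Real.sqrt_le_sqrt <| im_sq_le_of_mem_spectrum_fromBlocks _ (hA.map _ hf) (hD.map _ hf) hδ
    (mul_re_star_dotProduct_le_abs_sub_of_separated hA hD hsep')
    (norm_star_dotProduct_map_mulVec_sq_le Z) hμ hμim

theorem stmt3 {d₁ d₂ : ℕ} (hd₁ : 0 < d₁) (hd₂ : 0 < d₂)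
    (A : Matrix (Fin d₁) (Fin d₁) ℝ) (D : Matrix (Fin d₂) (Fin d₂) ℝ)
    (Z : Matrix (Fin d₁) (Fin d₂) ℝ)
    (hA : A.IsHermitian) (hD : D.IsHermitian)
    (δ : ℝ)
    (hsep : (lamMax hD < lamMin hA ∧ δ = lamMin hA - lamMax hD) ∨
            (lamMax hA < lamMin hD ∧ δ = lamMin hD - lamMax hA))
    (hZ : l2OpNorm Z > δ / 2) :
    ∀ μ ∈ spectrum ℂ ((Matrix.fromBlocks A Z (-Zᵀ) D).map (algebraMap ℝ ℂ)), μ.im ≠ 0 →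
      |μ.im| ≤ Real.sqrt ((l2OpNorm Z) ^ 2 - δ ^ 2 / 4) :=
  stmt3_general A D Z hA hD δ hsep
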